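/- For n > 1, let F_n be the probability distribution on [1, n] with F_n(x) = 1 − 1/x for 1 ≤ x < n and an atom of mass 1/n at n, and let μ_n be the product distribution of two i.i.d. values (v_1, v_2) drawn from F_n (a single unit-demand buyer and two items). Then: (a) for every n > 1, every item pricing together with every utility-maximizing selection has expected revenue at most 2 under μ_n; and (b) there exists N such that for all n ≥ N, the lottery menu L_n = {(1/2, 1/2, 5/2), (1, 0, 2 + 3n/8), (0, 1, 2 + 3n/8)} together with every utility-maximizing selection has expected revenue at least 2.2 under μ_n. In particular, for all n ≥ N the optimal lottery revenue under μ_n exceeds 1.1 times the optimal item-pricing revenue under μ_n. -/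

import Mathlib

open MeasureTheory

/-- A lottery over `m` items: allocation probabilities `q` with `q j ≥ 0`,
`∑ j, q j ≤ 1`, and a price `p ≥ 0`. -/
structure Lottery (m : ℕ) where
  q : Fin m → ℝ
  p : ℝ
  q_nonneg : ∀ j, 0 ≤ q j
  q_sum_le_one : ∑ j, q j ≤ 1
  p_nonneg : 0 ≤ p

/-- The (expected) utility of lottery `ℓ` at valuation `v`. -/
def Lottery.util {m : ℕ} (ℓ : Lottery m) (v : Fin m → ℝ) : ℝ :=
  (∑ j, ℓ.q j * v j) - ℓ.p

/-- The probability vector of a possibly-absent lottery (`⊥` ↦ 0). -/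
def selQ {m : ℕ} : Option (Lottery m) → Fin m → ℝ
  | some ℓ => ℓ.q
  | none => 0

/-- The price of a possibly-absent lottery (`⊥` ↦ 0). -/
def selP {m : ℕ} : Option (Lottery m) → ℝ
  | some ℓ => ℓ.p
  | none => 0

/-- `s` is a utility-maximizing selection for the lottery menu `L`. -/
structure IsSelection {m : ℕ} (L : Set (Lottery m))
    (s : (Fin m → ℝ) → Option (Lottery m)) : Prop where
  measQ : ∀ j, Measurable fun v => selQ (s v) j
  measP : Measurable fun v => selP (s v)
  buy_opt : ∀ v : Fin m → ℝ, (∀ j, 0 ≤ v j) → ∀ ℓ : Lottery m, s v = some ℓ →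
    ℓ ∈ L ∧ 0 ≤ ℓ.util v ∧ ∀ ℓ' ∈ L, ℓ'.util v ≤ ℓ.util v
  no_buy : ∀ v : Fin m → ℝ, (∀ j, 0 ≤ v j) → s v = none →
    ∀ ℓ ∈ L, ℓ.util v ≤ 0

/-- Expected revenue of a selection under the valuation distribution `μ`. -/
noncomputable def lotteryRevenue {m : ℕ} (μ : Measure (Fin m → ℝ))
    (s : (Fin m → ℝ) → Option (Lottery m)) : ℝ :=
  ∫ v, selP (s v) ∂μ

/-- An item pricing: every lottery in the menu allocates some item
deterministically (its probability vector is a standard basis vector). -/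
def IsItemPricing {m : ℕ} (L : Set (Lottery m)) : Prop :=
  ∀ ℓ ∈ L, ∃ j : Fin m, ℓ.q = fun j' => if j' = j then 1 else 0

/-- The optimal item-pricing revenue under `μ`. -/
noncomputable def optItemPricingRev {m : ℕ} (μ : Measure (Fin m → ℝ)) : ℝ :=
  sSup {r : ℝ | ∃ (L : Set (Lottery m)) (s : (Fin m → ℝ) → Option (Lottery m)),
    L.Nonempty ∧ IsItemPricing L ∧ IsSelection L s ∧ r = lotteryRevenue μ s}

/-- The optimal lottery revenue under `μ`. -/
noncomputable def optLotteryRev {m : ℕ} (μ : Measure (Fin m → ℝ)) : ℝ :=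
  sSup {r : ℝ | ∃ (L : Set (Lottery m)) (s : (Fin m → ℝ) → Option (Lottery m)),
    L.Nonempty ∧ IsSelection L s ∧ r = lotteryRevenue μ s}

/-- A dominant-strategy incentive compatible, individually rational
deterministic single-item auction for `m` bidders: `x v = some j` means bidder
`j` wins, `x v = none` means no winner; `pay v j ≥ 0` is bidder `j`'s payment. -/
structure IsAuction {m : ℕ} (x : (Fin m → ℝ) → Option (Fin m))
    (pay : (Fin m → ℝ) → Fin m → ℝ) : Prop where
  measX : ∀ j : Fin m, MeasurableSet {v | x v = some j}
  measPay : ∀ j : Fin m, Measurable fun v => pay v j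
  pay_nonneg : ∀ v j, 0 ≤ pay v j
  ic : ∀ v : Fin m → ℝ, (∀ j, 0 ≤ v j) → ∀ (j : Fin m) (v' : ℝ), 0 ≤ v' →
    (if x (Function.update v j v') = some j then v j else 0)
        - pay (Function.update v j v') j
      ≤ (if x v = some j then v j else 0) - pay v j
  ir : ∀ v : Fin m → ℝ, (∀ j, 0 ≤ v j) → ∀ j : Fin m,
    0 ≤ (if x v = some j then v j else 0) - pay v j

/-- Expected revenue of a single-item auction under `μ`. -/
noncomputable def auctionRevenue {m : ℕ} (μ : Measure (Fin m → ℝ))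
    (pay : (Fin m → ℝ) → Fin m → ℝ) : ℝ :=
  ∫ v, ∑ j, pay v j ∂μ

/-- The equal-revenue distribution truncated at `n`: its cdf is `1 - 1/x` on
`[1, n)` (density `1/x²` there), with an atom of mass `1/n` at `n`. -/
noncomputable def equalRevDist (n : ℝ) : Measure ℝ :=
  (volume.restrict (Set.Ico (1 : ℝ) n)).withDensity
      (fun x => ENNReal.ofReal (1 / x ^ 2)) +
    ENNReal.ofReal (1 / n) • Measure.dirac n

/-- The product distribution of two i.i.d. values drawn from the truncated
equal-revenue distribution. -/
noncomputable def equalRevMeasure (n : ℝ) : Measure (Fin 2 → ℝ) :=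
  Measure.pi fun _ : Fin 2 => equalRevDist n

/-- The lottery menu `{(1/2, 1/2, 5/2), (1, 0, 2 + 3n/8), (0, 1, 2 + 3n/8)}`. -/
def gapMenu (n : ℝ) : Set (Lottery 2) :=
  {ℓ : Lottery 2 | (ℓ.q = fun _ => 1 / 2) ∧ ℓ.p = 5 / 2} ∪
  {ℓ : Lottery 2 | ℓ.q = (fun j => if j = 0 then 1 else 0) ∧ ℓ.p = 2 + 3 * n / 8} ∪
  {ℓ : Lottery 2 | ℓ.q = (fun j => if j = 1 then 1 else 0) ∧ ℓ.p = 2 + 3 * n / 8}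

/-!
An item pricing earns, item by item, at most the cheapest posted price `p` of that item times
the probability `P(v_j ≥ p)`, since the buyer pays the cheapest price of the item he takes and only
takes it when `v_j ≥ p`; against the equal-revenue distribution `p * P(v_j ≥ p) ≤ 1`, so two
items earn at most `2`.

For the menu `gapMenu n` every purchase costs at least `5/2`, and the half-half lottery already
has positive utility when `v_1 + v_2 > 5`, an event of probability at least `171/350`. A sure item
costs `5/2 + (3n/4 - 1)/2` and is bought whenever its value exceeds the other one by more than
`3n/4 - 1`, an event of probability about `8/(3n)`; the premium `(3n/4 - 1)/2` on it adds
almost `1` to the revenue, for a total above `2.2`. Revenues of all menus are bounded by `n`, so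
the optimal lottery revenue is at least that of `gapMenu n`.
-/

open Set

attribute [ext] Lottery

namespace Lottery

variable {m : ℕ}

lemma subsingleton_setOf_q_p (q : Fin m → ℝ) (p : ℝ) :
    {ℓ : Lottery m | ℓ.q = q ∧ ℓ.p = p}.Subsingleton :=
  fun _ h _ h' => Lottery.ext (h.1.trans h'.1.symm) (h.2.trans h'.2.symm)

lemma measurable_util (ℓ : Lottery m) : Measurable ℓ.util := by
  unfold util
  fun_prop

lemma util_of_q_eq_single {ℓ : Lottery m} {j : Fin m}
    (h : ℓ.q = fun j' => if j' = j then 1 else 0) (v : Fin m → ℝ) :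
    ℓ.util v = v j - ℓ.p := by
  simp [util, h]

lemma p_le_of_util_nonneg {ℓ : Lottery m} {v : Fin m → ℝ} {B : ℝ} (hB : 0 ≤ B)
    (hvB : ∀ j, v j ≤ B) (h : 0 ≤ ℓ.util v) : ℓ.p ≤ B :=
  calc ℓ.p ≤ ∑ j, ℓ.q j * v j := by unfold util at h; linarith
    _ ≤ ∑ j, ℓ.q j * B := by
      gcongr with j
      exacts [ℓ.q_nonneg j, hvB j]
    _ = (∑ j, ℓ.q j) * B := by rw [Finset.sum_mul]
    _ ≤ B := mul_le_of_le_one_left hB ℓ.q_sum_le_one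

end Lottery

lemma selP_nonneg {m : ℕ} : ∀ o : Option (Lottery m), 0 ≤ selP o
  | none => le_rfl
  | some ℓ => ℓ.p_nonneg

namespace IsSelection

variable {m : ℕ} {L : Set (Lottery m)} {s : (Fin m → ℝ) → Option (Lottery m)}

lemma selP_le (hs : IsSelection L s) {v : Fin m → ℝ} (hv : ∀ j, 0 ≤ v j) {B : ℝ}
    (hB : 0 ≤ B) (hvB : ∀ j, v j ≤ B) : selP (s v) ≤ B := by
  cases hsv : s v with
  | none => exact hB
  | some ℓ => exact ℓ.p_le_of_util_nonneg hB hvB (hs.buy_opt v hv ℓ hsv).2.1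

lemma integrable_selP (hs : IsSelection L s) {μ : Measure (Fin m → ℝ)} [IsFiniteMeasure μ]
    {B : ℝ} (hB : 0 ≤ B) (hμ : ∀ᵐ v ∂μ, ∀ j, v j ∈ Icc 0 B) :
    Integrable (fun v => selP (s v)) μ := by
  refine Integrable.mono' (integrable_const B) hs.measP.aestronglyMeasurable ?_
  filter_upwards [hμ] with v hv
  rw [Real.norm_of_nonneg (selP_nonneg _)]
  exact hs.selP_le (fun j => (hv j).1) hB fun j => (hv j).2

lemma lotteryRevenue_le (hs : IsSelection L s) {μ : Measure (Fin m → ℝ)}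
    [IsProbabilityMeasure μ] {B : ℝ} (hB : 0 ≤ B) (hμ : ∀ᵐ v ∂μ, ∀ j, v j ∈ Icc 0 B) :
    lotteryRevenue μ s ≤ B := by
  have hle : ∀ᵐ v ∂μ, selP (s v) ≤ B := by
    filter_upwards [hμ] with v hv
    exact hs.selP_le (fun j => (hv j).1) hB fun j => (hv j).2
  simpa [lotteryRevenue] using integral_mono_ae (hs.integrable_selP hB hμ) (integrable_const B) hle

lemma le_selP (hs : IsSelection L s) {v : Fin m → ℝ} (hv : ∀ j, 0 ≤ v j) {ℓ₀ : Lottery m}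
    (hℓ₀ : ℓ₀ ∈ L) (hpos : 0 < ℓ₀.util v) {p₀ : ℝ}
    (hp₀ : ∀ ℓ ∈ L, ℓ₀.util v ≤ ℓ.util v → p₀ ≤ ℓ.p) : p₀ ≤ selP (s v) := by
  cases hsv : s v with
  | none => exact absurd (hs.no_buy v hv hsv ℓ₀ hℓ₀) (not_le.2 hpos)
  | some ℓ =>
    obtain ⟨hℓ, -, hmax⟩ := hs.buy_opt v hv ℓ hsv
    exact hp₀ ℓ hℓ (hmax ℓ₀ hℓ₀)

end IsSelection

lemma measurable_comp_find? {α β γ : Type*} [MeasurableSpace α] [MeasurableSpace γ]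
    (f : Option β → γ) (p : α → β → Bool) : ∀ l : List β, (∀ b ∈ l, MeasurableSet {x | p x b}) →
      Measurable fun x => f (l.find? (p x))
  | [], _ => by simp
  | b :: l, hl => by
    have hfind : (fun x => f ((b :: l).find? (p x))) =
        fun x => if p x b then f (some b) else f (l.find? (p x)) := by
      funext x
      cases h : p x b <;> simp [h]
    rw [hfind]
    exact Measurable.ite (hl b List.mem_cons_self) measurable_const
      (measurable_comp_find? f p l fun b' hb' => hl b' (List.mem_cons_of_mem b hb'))

open Classical in
noncomputable def firstOptimal {m : ℕ} (l : List (Lottery m)) (v : Fin m → ℝ) :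
    Option (Lottery m) :=
  l.find? fun ℓ => decide (0 ≤ ℓ.util v ∧ ∀ ℓ' ∈ l, ℓ'.util v ≤ ℓ.util v)

theorem isSelection_firstOptimal {m : ℕ} (l : List (Lottery m)) :
    IsSelection {ℓ | ℓ ∈ l} (firstOptimal l) := by
  classical
  have hmeas : ∀ f : Option (Lottery m) → ℝ, Measurable fun v => f (firstOptimal l v) := by
    refine fun f => measurable_comp_find? f _ l fun ℓ _ => ?_
    simp only [decide_eq_true_eq, ofPred_and, ofPred_forall]
    exact (measurableSet_le measurable_const ℓ.measurable_util).inter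
      (l.finite_toSet.measurableSet_biInter fun ℓ' _ =>
        measurableSet_le ℓ'.measurable_util ℓ.measurable_util)
  refine ⟨fun j => hmeas (selQ · j), hmeas selP, fun v _ ℓ hsv => ?_, fun v _ hsv ℓ hℓ => ?_⟩
  · have := List.find?_some hsv
    simp only [decide_eq_true_eq] at this
    exact ⟨List.mem_of_find?_eq_some hsv, this⟩
  · obtain ⟨ℓ₀, hℓ₀, hmax⟩ :=
      l.toFinset.exists_max_image (fun ℓ => ℓ.util v) ⟨ℓ, List.mem_toFinset.2 hℓ⟩
    simp only [List.mem_toFinset] at hℓ₀ hmax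
    have h := List.find?_eq_none.1 hsv ℓ₀ hℓ₀
    simp only [decide_eq_true_eq, not_and] at h
    by_contra! hpos
    exact h ((hmax ℓ hℓ).trans' hpos.le) hmax

theorem exists_isSelection_of_finite {m : ℕ} {L : Set (Lottery m)} (hL : L.Finite) :
    ∃ s, IsSelection L s := by
  obtain ⟨F, rfl⟩ := hL.exists_finset_coe
  refine ⟨firstOptimal F.toList, ?_⟩
  simpa using isSelection_firstOptimal F.toList

section ItemPricing

variable {m : ℕ}

/-- The cheapest price of item `j` in `L`; it is `sInf ∅ = 0` if `L` does not offer `j`. -/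
noncomputable def itemPrice (L : Set (Lottery m)) (j : Fin m) : ℝ :=
  sInf (Lottery.p '' {ℓ ∈ L | ℓ.q = fun j' => if j' = j then 1 else 0})

variable {L : Set (Lottery m)} {s : (Fin m → ℝ) → Option (Lottery m)}

lemma itemPrice_nonneg (L : Set (Lottery m)) (j : Fin m) : 0 ≤ itemPrice L j :=
  Real.sInf_nonneg <| by
    rintro _ ⟨ℓ, -, rfl⟩
    exact ℓ.p_nonneg

/-- Lotteries offering the same item differ only in price, so the one bought is the cheapest. -/
lemma IsSelection.p_eq_itemPrice (hs : IsSelection L s) {v : Fin m → ℝ} (hv : ∀ j, 0 ≤ v j)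
    {ℓ : Lottery m} (hsv : s v = some ℓ) {j : Fin m}
    (hq : ℓ.q = fun j' => if j' = j then 1 else 0) : ℓ.p = itemPrice L j := by
  obtain ⟨hℓ, -, hmax⟩ := hs.buy_opt v hv ℓ hsv
  refine le_antisymm (le_csInf ⟨ℓ.p, ℓ, ⟨hℓ, hq⟩, rfl⟩ ?_) (csInf_le ?_ ⟨ℓ, ⟨hℓ, hq⟩, rfl⟩)
  · rintro _ ⟨ℓ', ⟨hℓ', hq'⟩, rfl⟩
    have := hmax ℓ' hℓ'
    rw [Lottery.util_of_q_eq_single hq, Lottery.util_of_q_eq_single hq'] at this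
    linarith
  · exact ⟨0, by rintro _ ⟨ℓ', -, rfl⟩; exact ℓ'.p_nonneg⟩

lemma IsSelection.selP_le_sum_indicator (hs : IsSelection L s) (hL : IsItemPricing L)
    {v : Fin m → ℝ} (hv : ∀ j, 0 ≤ v j) :
    selP (s v) ≤ ∑ j, {v' | itemPrice L j ≤ v' j}.indicator (fun _ => itemPrice L j) v := by
  have hterm : ∀ j, 0 ≤ {v' | itemPrice L j ≤ v' j}.indicator (fun _ => itemPrice L j) v :=
    fun j => indicator_nonneg (fun _ _ => itemPrice_nonneg L j) v
  cases hsv : s v with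
  | none => exact Finset.sum_nonneg fun j _ => hterm j
  | some ℓ =>
    obtain ⟨hℓ, hir, -⟩ := hs.buy_opt v hv ℓ hsv
    obtain ⟨j, hq⟩ := hL ℓ hℓ
    have hp := hs.p_eq_itemPrice hv hsv hq
    rw [Lottery.util_of_q_eq_single hq] at hir
    have hmem : v ∈ {v' | itemPrice L j ≤ v' j} := by
      change itemPrice L j ≤ v j
      linarith
    calc selP (some ℓ) = {v' | itemPrice L j ≤ v' j}.indicator (fun _ => itemPrice L j) v := by
          rw [indicator_of_mem hmem, ← hp]
          rfl
      _ ≤ _ := Finset.single_le_sum (fun j _ => hterm j) (Finset.mem_univ j)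

theorem lotteryRevenue_le_sum_of_isItemPricing {μ : Measure (Fin m → ℝ)} [IsFiniteMeasure μ]
    (hμ : ∀ᵐ v ∂μ, ∀ j, 0 ≤ v j) (hL : IsItemPricing L) (hs : IsSelection L s)
    {R : Fin m → ℝ} (hR : ∀ j p, 0 ≤ p → p * μ.real {v | p ≤ v j} ≤ R j) :
    lotteryRevenue μ s ≤ ∑ j, R j := by
  have hmeas : ∀ j, MeasurableSet {v : Fin m → ℝ | itemPrice L j ≤ v j} :=
    fun j => measurableSet_le measurable_const (measurable_pi_apply j)
  have hint : ∀ j ∈ Finset.univ, Integrable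
      ({v | itemPrice L j ≤ v j}.indicator fun _ => itemPrice L j) μ :=
    fun j _ => (integrable_const _).indicator (hmeas j)
  have hdom : ∀ᵐ v ∂μ, selP (s v) ≤
      ∑ j, {v' | itemPrice L j ≤ v' j}.indicator (fun _ => itemPrice L j) v := by
    filter_upwards [hμ] with v hv using hs.selP_le_sum_indicator hL hv
  have hint_sum := integrable_finsetSum Finset.univ hint
  calc lotteryRevenue μ s
      ≤ ∫ v, ∑ j, {v' | itemPrice L j ≤ v' j}.indicator (fun _ => itemPrice L j) v ∂μ := by
        refine integral_mono_ae ?_ hint_sum hdom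
        refine hint_sum.mono' hs.measP.aestronglyMeasurable ?_
        filter_upwards [hdom] with v hv
        rwa [Real.norm_of_nonneg (selP_nonneg _)]
    _ = ∑ j, itemPrice L j * μ.real {v | itemPrice L j ≤ v j} := by
        rw [integral_finsetSum _ hint]
        refine Finset.sum_congr rfl fun j _ => ?_
        rw [integral_indicator_const _ (hmeas j), smul_eq_mul, mul_comm]
    _ ≤ ∑ j, R j := Finset.sum_le_sum fun j _ => hR j _ (itemPrice_nonneg L j)

end ItemPricing

lemma lintegral_Ico_inv_sq {a b : ℝ} (ha : 0 < a) (hab : a ≤ b) :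
    ∫⁻ x in Ico a b, ENNReal.ofReal (1 / x ^ 2) = ENNReal.ofReal (1 / a - 1 / b) := by
  have hcont : ContinuousOn (fun x : ℝ => 1 / x ^ 2) (Icc a b) :=
    continuousOn_const.div (continuousOn_pow 2) fun x hx => by nlinarith [hx.1]
  have hderiv : ∀ x ∈ uIcc a b, HasDerivAt (fun x : ℝ => -x⁻¹) (1 / x ^ 2) x := by
    intro x hx
    rw [uIcc_of_le hab] at hx
    simpa [one_div] using (hasDerivAt_inv (by linarith [hx.1] : x ≠ 0)).fun_neg
  rw [← ofReal_integral_eq_lintegral_ofReal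
      ((hcont.integrableOn_Icc).mono_set Ico_subset_Icc_self)
      (Filter.Eventually.of_forall fun x => by positivity),
    integral_Ico_eq_integral_Ioo, ← integral_Ioc_eq_integral_Ioo,
    ← intervalIntegral.integral_of_le hab,
    intervalIntegral.integral_eq_sub_of_hasDerivAt hderiv
      (hcont.intervalIntegrable_of_Icc hab)]
  congr 1
  ring

section EqualRevenue

variable {n : ℝ}

lemma equalRevDist_apply {A : Set ℝ} (hA : MeasurableSet A) :
    equalRevDist n A = (∫⁻ x in A ∩ Ico 1 n, ENNReal.ofReal (1 / x ^ 2)) +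
      ENNReal.ofReal (1 / n) * A.indicator 1 n := by
  rw [equalRevDist, Measure.add_apply, withDensity_apply _ hA, Measure.restrict_restrict hA,
    Measure.smul_apply, Measure.dirac_apply' _ hA, smul_eq_mul]

lemma equalRevDist_real_Ico {a b : ℝ} (ha : 1 ≤ a) (hab : a ≤ b) (hb : b ≤ n) :
    (equalRevDist n).real (Ico a b) = 1 / a - 1 / b := by
  rw [measureReal_def, equalRevDist_apply measurableSet_Ico,
    inter_eq_self_of_subset_left (Ico_subset_Ico ha hb),
    lintegral_Ico_inv_sq (by linarith) hab, indicator_of_notMem (fun h => h.2.not_ge hb),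
    mul_zero, add_zero,
    ENNReal.toReal_ofReal (sub_nonneg.2 (one_div_le_one_div_of_le (by linarith) hab))]

lemma equalRevDist_Ici {a : ℝ} (ha : 1 ≤ a) (han : a ≤ n) :
    equalRevDist n (Ici a) = ENNReal.ofReal (1 / a) := by
  have hinter : Ici a ∩ Ico 1 n = Ico a n := by
    ext x
    simp only [mem_inter_iff, mem_Ici, mem_Ico]
    grind
  rw [equalRevDist_apply measurableSet_Ici, hinter, lintegral_Ico_inv_sq (by linarith) han,
    indicator_of_mem (mem_Ici.2 han), Pi.one_apply, mul_one,
    ← ENNReal.ofReal_add (sub_nonneg.2 (one_div_le_one_div_of_le (by linarith) han))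
      (one_div_nonneg.2 (by linarith)), sub_add_cancel]

lemma equalRevDist_real_Ioi {a : ℝ} (ha : 1 ≤ a) (han : a < n) :
    (equalRevDist n).real (Ioi a) = 1 / a := by
  have hinter : Ioi a ∩ Ico 1 n = Ioo a n := by
    ext x
    simp only [mem_inter_iff, mem_Ioi, mem_Ico, mem_Ioo]
    grind
  rw [measureReal_def, equalRevDist_apply measurableSet_Ioi, hinter,
    setLIntegral_congr Ioo_ae_eq_Ico,
    lintegral_Ico_inv_sq (by linarith) han.le, indicator_of_mem (mem_Ioi.2 han), Pi.one_apply,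
    mul_one, ← ENNReal.ofReal_add (sub_nonneg.2 (one_div_le_one_div_of_le (by linarith) han.le))
      (one_div_nonneg.2 (by linarith)), sub_add_cancel,
    ENNReal.toReal_ofReal (one_div_nonneg.2 (by linarith))]

lemma equalRevDist_compl_Icc (hn : 1 ≤ n) : equalRevDist n (Icc 1 n)ᶜ = 0 := by
  rw [equalRevDist_apply measurableSet_Icc.compl,
    (disjoint_compl_left_iff_subset.2 Ico_subset_Icc_self).inter_eq,
    indicator_of_notMem (not_not.2 (right_mem_Icc.2 hn))]
  simp

lemma isProbabilityMeasure_equalRevDist (hn : 1 ≤ n) : IsProbabilityMeasure (equalRevDist n) :=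
  ⟨by
    rw [← Iio_union_Ici (a := (1 : ℝ)), measure_union (Iio_disjoint_Ici le_rfl) measurableSet_Ici,
      measure_mono_null (show Iio 1 ⊆ (Icc 1 n)ᶜ from fun x hx h => not_le.2 hx h.1)
        (equalRevDist_compl_Icc hn),
      equalRevDist_Ici le_rfl hn, zero_add, div_one, ENNReal.ofReal_one]⟩

lemma mul_equalRevDist_real_Ici_le_one (hn : 1 ≤ n) (p : ℝ) :
    p * (equalRevDist n).real (Ici p) ≤ 1 := by
  have := isProbabilityMeasure_equalRevDist hn
  rcases le_or_gt p 1 with hp1 | hp1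
  · exact (mul_le_of_le_one_left measureReal_nonneg hp1).trans measureReal_le_one
  rcases le_or_gt p n with hpn | hpn
  · rw [measureReal_def, equalRevDist_Ici hp1.le hpn, ENNReal.toReal_ofReal (by positivity),
      mul_one_div_cancel (by positivity)]
  · have h0 : equalRevDist n (Ici p) = 0 :=
      measure_mono_null (show Ici p ⊆ (Icc 1 n)ᶜ from fun x hx h => hpn.not_ge (hx.trans h.2))
        (equalRevDist_compl_Icc hn)
    rw [measureReal_def, h0, ENNReal.toReal_zero, mul_zero]
    exact zero_le_one

lemma isProbabilityMeasure_equalRevMeasure (hn : 1 ≤ n) :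
    IsProbabilityMeasure (equalRevMeasure n) := by
  have := isProbabilityMeasure_equalRevDist hn
  unfold equalRevMeasure
  infer_instance

lemma equalRevMeasure_real_eval_preimage (hn : 1 ≤ n) (j : Fin 2) {A : Set ℝ}
    (hA : MeasurableSet A) : (equalRevMeasure n).real {v | v j ∈ A} = (equalRevDist n).real A := by
  have := isProbabilityMeasure_equalRevDist hn
  exact (measurePreserving_eval (fun _ : Fin 2 => equalRevDist n) j).measureReal_preimage
    hA.nullMeasurableSet

lemma equalRevMeasure_real_rect (hn : 1 ≤ n) (A B : Set ℝ) :
    (equalRevMeasure n).real {v | v 0 ∈ A ∧ v 1 ∈ B} =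
      (equalRevDist n).real A * (equalRevDist n).real B := by
  have := isProbabilityMeasure_equalRevDist hn
  have hpi : {v : Fin 2 → ℝ | v 0 ∈ A ∧ v 1 ∈ B} = univ.pi ![A, B] := by
    ext v
    simp [Fin.forall_fin_two]
  simp [measureReal_def, hpi, equalRevMeasure, Measure.pi_pi, Fin.prod_univ_two]

lemma ae_equalRevMeasure_mem_Icc (hn : 1 ≤ n) :
    ∀ᵐ v ∂equalRevMeasure n, ∀ j, v j ∈ Icc 1 n := by
  have := isProbabilityMeasure_equalRevDist hn
  refine ae_all_iff.2 fun j => Measure.tendsto_eval_ae_ae.eventually ?_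
  exact mem_ae_iff.2 (equalRevDist_compl_Icc hn)

theorem lotteryRevenue_equalRevMeasure_le_two_of_isItemPricing (hn : 1 ≤ n)
    {L : Set (Lottery 2)} {s : (Fin 2 → ℝ) → Option (Lottery 2)} (hL : IsItemPricing L)
    (hs : IsSelection L s) : lotteryRevenue (equalRevMeasure n) s ≤ 2 := by
  have := isProbabilityMeasure_equalRevMeasure hn
  have hμ : ∀ᵐ v ∂equalRevMeasure n, ∀ j, 0 ≤ v j := by
    filter_upwards [ae_equalRevMeasure_mem_Icc hn] with v hv j using zero_le_one.trans (hv j).1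
  have := lotteryRevenue_le_sum_of_isItemPricing hμ hL hs (R := fun _ => 1) fun j p _ => by
    change p * (equalRevMeasure n).real {v | v j ∈ Ici p} ≤ 1
    rw [equalRevMeasure_real_eval_preimage hn j measurableSet_Ici]
    exact mul_equalRevDist_real_Ici_le_one hn p
  simpa [one_add_one_eq_two] using this

end EqualRevenue

section GapMenu

variable {n : ℝ}

noncomputable def gapBundle : Lottery 2 where
  q := fun _ => 1 / 2
  p := 5 / 2
  q_nonneg := fun _ => by norm_num
  q_sum_le_one := by norm_num
  p_nonneg := by norm_num

noncomputable def gapItem (n : ℝ) (hn : 0 ≤ n) (i : Fin 2) : Lottery 2 where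
  q := fun j => if j = i then 1 else 0
  p := 2 + 3 * n / 8
  q_nonneg := fun j => by split_ifs <;> norm_num
  q_sum_le_one := by simp
  p_nonneg := by positivity

lemma gapBundle_mem_gapMenu : gapBundle ∈ gapMenu n := Or.inl (Or.inl ⟨rfl, rfl⟩)

lemma gapItem_mem_gapMenu (hn : 0 ≤ n) (i : Fin 2) : gapItem n hn i ∈ gapMenu n := by
  obtain rfl | rfl : i = 0 ∨ i = 1 := by omega
  exacts [Or.inl (Or.inr ⟨rfl, rfl⟩), Or.inr ⟨rfl, rfl⟩]

lemma gapMenu_finite (n : ℝ) : (gapMenu n).Finite :=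
  ((Lottery.subsingleton_setOf_q_p _ _).finite.union
    (Lottery.subsingleton_setOf_q_p _ _).finite).union (Lottery.subsingleton_setOf_q_p _ _).finite

lemma util_gapBundle (v : Fin 2 → ℝ) : gapBundle.util v = (v 0 + v 1) / 2 - 5 / 2 := by
  simp only [Lottery.util, gapBundle, Fin.sum_univ_two]
  ring

lemma util_of_mem_gapMenu {ℓ : Lottery 2} (hℓ : ℓ ∈ gapMenu n) (v : Fin 2 → ℝ) :
    (ℓ.p = 5 / 2 ∧ ℓ.util v = (v 0 + v 1) / 2 - 5 / 2) ∨
      (ℓ.p = 2 + 3 * n / 8 ∧ ℓ.util v = v 0 - (2 + 3 * n / 8)) ∨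
      (ℓ.p = 2 + 3 * n / 8 ∧ ℓ.util v = v 1 - (2 + 3 * n / 8)) := by
  rcases hℓ with (⟨hq, hp⟩ | ⟨hq, hp⟩) | ⟨hq, hp⟩
  · refine Or.inl ⟨hp, ?_⟩
    simp only [Lottery.util, hq, hp, Fin.sum_univ_two]
    ring
  · exact Or.inr (Or.inl ⟨hp, by rw [Lottery.util_of_q_eq_single hq, hp]⟩)
  · exact Or.inr (Or.inr ⟨hp, by rw [Lottery.util_of_q_eq_single hq, hp]⟩)

variable {s : (Fin 2 → ℝ) → Option (Lottery 2)} {v : Fin 2 → ℝ}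

lemma IsSelection.gapBundle_price_le_selP (hs : IsSelection (gapMenu n) s) (hn : 4 / 3 ≤ n)
    (hv : ∀ j, 0 ≤ v j) (h5 : 5 < v 0 + v 1) : 5 / 2 ≤ selP (s v) := by
  refine hs.le_selP hv gapBundle_mem_gapMenu (by rw [util_gapBundle]; linarith) fun ℓ hℓ _ => ?_
  rcases util_of_mem_gapMenu hℓ v with ⟨hp, -⟩ | ⟨hp, -⟩ | ⟨hp, -⟩ <;> linarith

/-- The margin `3n/4 - 1` is exactly what makes item `i` beat the half-half lottery. -/
lemma IsSelection.gapItem_price_le_selP (hs : IsSelection (gapMenu n) s) (hn : 4 / 3 ≤ n)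
    (hv : ∀ j, 0 ≤ v j) (i : Fin 2) (hi : 2 + 3 * n / 8 < v i)
    (hdom : ∀ j ≠ i, 3 * n / 4 - 1 < v i - v j) : 2 + 3 * n / 8 ≤ selP (s v) := by
  have hn0 : 0 ≤ n := by linarith
  have hutil : (gapItem n hn0 i).util v = v i - (2 + 3 * n / 8) :=
    Lottery.util_of_q_eq_single rfl v
  refine hs.le_selP hv (gapItem_mem_gapMenu hn0 i) (by linarith) fun ℓ hℓ hle => ?_
  rw [hutil] at hle
  obtain rfl | rfl : i = 0 ∨ i = 1 := by omega
  · have := hdom 1 (by decide)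
    rcases util_of_mem_gapMenu hℓ v with ⟨hp, hu⟩ | ⟨hp, hu⟩ | ⟨hp, hu⟩ <;> linarith
  · have := hdom 0 (by decide)
    rcases util_of_mem_gapMenu hℓ v with ⟨hp, hu⟩ | ⟨hp, hu⟩ | ⟨hp, hu⟩ <;> linarith

end GapMenu

section GapRevenue

variable {n : ℝ}

lemma measurableSet_rect {A B : Set ℝ} (hA : MeasurableSet A) (hB : MeasurableSet B) :
    MeasurableSet {v : Fin 2 → ℝ | v 0 ∈ A ∧ v 1 ∈ B} :=
  (measurable_pi_apply 0 hA).inter (measurable_pi_apply 1 hB)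

def stairStep (k : ℕ) : Set (Fin 2 → ℝ) :=
  {v | v 0 ∈ Ioi (4 - (k : ℝ) / 2) ∧ v 1 ∈ Ico (1 + (k : ℝ) / 2) (1 + ((k + 1 : ℕ) : ℝ) / 2)}

def staircase : Set (Fin 2 → ℝ) :=
  {v | v 0 ∈ Ioi 1 ∧ v 1 ∈ Ici 4} ∪ ⋃ k ∈ Finset.range 6, stairStep k

lemma staircase_subset : staircase ⊆ {v | 5 < v 0 + v 1} := by
  rintro v (⟨h0, h1⟩ | hv)
  · exact show 5 < v 0 + v 1 by linarith [mem_Ioi.1 h0, mem_Ici.1 h1]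
  · obtain ⟨k, -, h0, h1, -⟩ := mem_iUnion₂.1 hv
    exact show 5 < v 0 + v 1 by linarith [mem_Ioi.1 h0]

lemma equalRevMeasure_real_staircase (hn : 4 < n) :
    (equalRevMeasure n).real staircase = 171 / 350 := by
  have hn1 : 1 ≤ n := by linarith
  have := isProbabilityMeasure_equalRevMeasure hn1
  have hmono : Monotone fun k : ℕ => 1 + (k : ℝ) / 2 := fun k l hkl => by dsimp only; gcongr
  have hdisj_step : (Finset.range 6 : Set ℕ).PairwiseDisjoint stairStep := fun k _ l _ hkl =>
    ((hmono.pairwise_disjoint_on_Ico_succ hkl).preimage fun v : Fin 2 → ℝ => v 1).mono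
      (fun _ hv => hv.2) (fun _ hv => hv.2)
  have hdisj_top : Disjoint {v : Fin 2 → ℝ | v 0 ∈ Ioi 1 ∧ v 1 ∈ Ici 4}
      (⋃ k ∈ Finset.range 6, stairStep k) := by
    refine disjoint_left.2 fun v ⟨_, htop⟩ hv => ?_
    obtain ⟨k, hk, -, -, hk'⟩ := mem_iUnion₂.1 hv
    have : k + 1 ≤ 6 := Finset.mem_range.1 hk
    exact (hk'.trans_le (hmono this)).not_ge (by norm_num at htop ⊢; exact htop)
  have hstep : ∀ k ∈ Finset.range 6, (equalRevMeasure n).real (stairStep k) =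
      1 / (4 - (k : ℝ) / 2) * (1 / (1 + (k : ℝ) / 2) - 1 / (1 + ((k + 1 : ℕ) : ℝ) / 2)) := by
    intro k hk
    have hk5 : (k : ℝ) ≤ 5 := by exact_mod_cast Nat.lt_succ_iff.1 (Finset.mem_range.1 hk)
    have hk0 : (0 : ℝ) ≤ k := k.cast_nonneg
    rw [stairStep, equalRevMeasure_real_rect hn1, equalRevDist_real_Ioi (by linarith) (by linarith),
      equalRevDist_real_Ico (by linarith) (hmono k.le_succ) (by push_cast; linarith)]
  have htop : (equalRevMeasure n).real {v : Fin 2 → ℝ | v 0 ∈ Ioi 1 ∧ v 1 ∈ Ici 4} = 1 / 4 := by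
    rw [equalRevMeasure_real_rect hn1, equalRevDist_real_Ioi le_rfl (by linarith), measureReal_def,
      equalRevDist_Ici (by norm_num) hn.le, ENNReal.toReal_ofReal (by norm_num), one_div_one,
      one_mul]
  rw [staircase, measureReal_union hdisj_top (Finset.measurableSet_biUnion _ fun k _ =>
      measurableSet_rect measurableSet_Ioi measurableSet_Ico) (measure_ne_top _ _)
      (measure_ne_top _ _),
    measureReal_biUnion_finset hdisj_step fun k _ =>
      measurableSet_rect measurableSet_Ioi measurableSet_Ico,
    Finset.sum_congr rfl hstep, htop]
  norm_num [Finset.sum_range_succ]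

def gapItemRegion (n : ℝ) : Set (Fin 2 → ℝ) :=
  {v | v 0 ∈ Ioi (3 * n / 4 + 99) ∧ v 1 ∈ Ico 1 100} ∪
    {v | v 0 ∈ Ico 1 100 ∧ v 1 ∈ Ioi (3 * n / 4 + 99)}

lemma measurableSet_gapItemRegion (n : ℝ) : MeasurableSet (gapItemRegion n) :=
  (measurableSet_rect measurableSet_Ioi measurableSet_Ico).union
    (measurableSet_rect measurableSet_Ico measurableSet_Ioi)

lemma equalRevMeasure_real_gapItemRegion (hn : 400 ≤ n) :
    (equalRevMeasure n).real (gapItemRegion n) = 2 * (1 / (3 * n / 4 + 99) * (99 / 100)) := by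
  have hn1 : 1 ≤ n := by linarith
  have := isProbabilityMeasure_equalRevMeasure hn1
  have hdisj : Disjoint {v : Fin 2 → ℝ | v 0 ∈ Ioi (3 * n / 4 + 99) ∧ v 1 ∈ Ico 1 100}
      {v | v 0 ∈ Ico 1 100 ∧ v 1 ∈ Ioi (3 * n / 4 + 99)} :=
    disjoint_left.2 fun v h h' => by linarith [mem_Ioi.1 h.1, (mem_Ico.1 h'.1).2]
  have hIoi : (equalRevDist n).real (Ioi (3 * n / 4 + 99)) = 1 / (3 * n / 4 + 99) :=
    equalRevDist_real_Ioi (by linarith) (by linarith)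
  have hIco : (equalRevDist n).real (Ico 1 100) = 99 / 100 := by
    rw [equalRevDist_real_Ico le_rfl (by norm_num) (by linarith)]
    norm_num
  rw [gapItemRegion,
    measureReal_union hdisj (measurableSet_rect measurableSet_Ico measurableSet_Ioi)
      (measure_ne_top _ _) (measure_ne_top _ _),
    equalRevMeasure_real_rect hn1, equalRevMeasure_real_rect hn1, hIoi, hIco]
  ring

variable {s : (Fin 2 → ℝ) → Option (Lottery 2)} {v : Fin 2 → ℝ}

lemma IsSelection.indicator_add_indicator_le_selP_gapMenu (hs : IsSelection (gapMenu n) s)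
    (hn : 4 / 3 ≤ n) (hv : ∀ j, v j ∈ Icc 1 n) :
    {v' : Fin 2 → ℝ | 5 < v' 0 + v' 1}.indicator (fun _ => 5 / 2) v +
      (gapItemRegion n).indicator (fun _ => 3 * n / 8 - 1 / 2) v ≤ selP (s v) := by
  have hv0 : ∀ j, 0 ≤ v j := fun j => zero_le_one.trans (hv j).1
  by_cases hW : v ∈ gapItemRegion n
  · have h5 : 5 < v 0 + v 1 := by
      rcases hW with ⟨h0, h1⟩ | ⟨h0, h1⟩
      · linarith [mem_Ioi.1 h0, (mem_Ico.1 h1).1]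
      · linarith [mem_Ioi.1 h1, (mem_Ico.1 h0).1]
    have hP : 2 + 3 * n / 8 ≤ selP (s v) := by
      rcases hW with ⟨h0, h1⟩ | ⟨h0, h1⟩
      · refine hs.gapItem_price_le_selP hn hv0 0 (by linarith [mem_Ioi.1 h0]) fun j hj => ?_
        obtain rfl : j = 1 := by omega
        linarith [mem_Ioi.1 h0, (mem_Ico.1 h1).2]
      · refine hs.gapItem_price_le_selP hn hv0 1 (by linarith [mem_Ioi.1 h1]) fun j hj => ?_
        obtain rfl : j = 0 := by omega
        linarith [mem_Ioi.1 h1, (mem_Ico.1 h0).2]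
    rw [indicator_of_mem (show v ∈ {v' : Fin 2 → ℝ | 5 < v' 0 + v' 1} from h5),
      indicator_of_mem hW]
    linarith
  · rw [indicator_of_notMem hW, add_zero]
    by_cases h5 : 5 < v 0 + v 1
    · rw [indicator_of_mem (show v ∈ {v' : Fin 2 → ℝ | 5 < v' 0 + v' 1} from h5)]
      exact hs.gapBundle_price_le_selP hn hv0 h5
    · rw [indicator_of_notMem (show v ∉ {v' : Fin 2 → ℝ | 5 < v' 0 + v' 1} from h5)]
      exact selP_nonneg _

theorem lt_lotteryRevenue_gapMenu (hn : 20000 ≤ n) (hs : IsSelection (gapMenu n) s) :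
    11 / 5 < lotteryRevenue (equalRevMeasure n) s := by
  have hn1 : 1 ≤ n := by linarith
  have := isProbabilityMeasure_equalRevMeasure hn1
  have hS : MeasurableSet {v : Fin 2 → ℝ | 5 < v 0 + v 1} :=
    measurableSet_lt measurable_const (by fun_prop)
  have hint_S := (integrable_const (5 / 2 : ℝ)).indicator (μ := equalRevMeasure n) hS
  have hint_W := (integrable_const (3 * n / 8 - 1 / 2)).indicator (μ := equalRevMeasure n)
    (measurableSet_gapItemRegion n)
  have hle : ∀ᵐ v ∂equalRevMeasure n,
      {v' : Fin 2 → ℝ | 5 < v' 0 + v' 1}.indicator (fun _ => 5 / 2) v +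
        (gapItemRegion n).indicator (fun _ => 3 * n / 8 - 1 / 2) v ≤ selP (s v) := by
    filter_upwards [ae_equalRevMeasure_mem_Icc hn1] with v hv
    exact hs.indicator_add_indicator_le_selP_gapMenu (by linarith) hv
  have hsel : Integrable (fun v => selP (s v)) (equalRevMeasure n) :=
    hs.integrable_selP (by linarith) <| by
      filter_upwards [ae_equalRevMeasure_mem_Icc hn1] with v hv j
      exact Icc_subset_Icc_left zero_le_one (hv j)
  have hsum : 171 / 350 ≤ (equalRevMeasure n).real {v | 5 < v 0 + v 1} :=
    equalRevMeasure_real_staircase (n := n) (by linarith) ▸ measureReal_mono staircase_subset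
  have hitem : 11 / 5 - 5 / 2 * (171 / 350) <
      (equalRevMeasure n).real (gapItemRegion n) * (3 * n / 8 - 1 / 2) := by
    have hpos : 0 < 3 * n / 4 + 99 := by linarith
    rw [equalRevMeasure_real_gapItemRegion (by linarith),
      show 2 * (1 / (3 * n / 4 + 99) * (99 / 100)) * (3 * n / 8 - 1 / 2) =
        99 * (3 * n / 4 - 1) / (100 * (3 * n / 4 + 99)) by field_simp; ring,
      lt_div_iff₀ (by positivity)]
    linarith
  calc (11 / 5 : ℝ)
      < (equalRevMeasure n).real {v | 5 < v 0 + v 1} * (5 / 2) +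
          (equalRevMeasure n).real (gapItemRegion n) * (3 * n / 8 - 1 / 2) := by linarith
    _ = ∫ v, ({v' : Fin 2 → ℝ | 5 < v' 0 + v' 1}.indicator (fun _ => 5 / 2) v +
          (gapItemRegion n).indicator (fun _ => 3 * n / 8 - 1 / 2) v) ∂equalRevMeasure n := by
        rw [integral_add hint_S hint_W, integral_indicator_const _ hS,
          integral_indicator_const _ (measurableSet_gapItemRegion n), smul_eq_mul, smul_eq_mul]
    _ ≤ lotteryRevenue (equalRevMeasure n) s := integral_mono_ae (hint_S.add hint_W) hsel hle

end GapRevenue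

/-- For two i.i.d. item values drawn from the truncated
equal-revenue distribution: (a) for every `n > 1`, every item pricing with
every utility-maximizing selection has expected revenue at most `2`; and
(b) there exists `N` such that for all `n ≥ N`, the lottery menu
`{(1/2, 1/2, 5/2), (1, 0, 2 + 3n/8), (0, 1, 2 + 3n/8)}` with every
utility-maximizing selection has expected revenue at least `2.2`, and in
particular the optimal lottery revenue exceeds `1.1` times the optimal
item-pricing revenue. -/
theorem equalRev_lottery_beats_item_pricing :
    (∀ n : ℝ, 1 < n →
      ∀ (L : Set (Lottery 2)) (s : (Fin 2 → ℝ) → Option (Lottery 2)),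
        L.Nonempty → IsItemPricing L → IsSelection L s →
        lotteryRevenue (equalRevMeasure n) s ≤ 2) ∧
    ∃ N : ℝ, ∀ n : ℝ, N ≤ n →
      (∀ s : (Fin 2 → ℝ) → Option (Lottery 2), IsSelection (gapMenu n) s →
        (2.2 : ℝ) ≤ lotteryRevenue (equalRevMeasure n) s) ∧
      1.1 * optItemPricingRev (equalRevMeasure n) <
        optLotteryRev (equalRevMeasure n) := by
  refine ⟨fun n hn L s _ hL hs =>
    lotteryRevenue_equalRevMeasure_le_two_of_isItemPricing hn.le hL hs, 20000, fun n hn => ?_⟩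
  have hn1 : 1 ≤ n := by linarith
  have := isProbabilityMeasure_equalRevMeasure hn1
  refine ⟨fun s hs => by linarith [lt_lotteryRevenue_gapMenu hn hs], ?_⟩
  have hitem : optItemPricingRev (equalRevMeasure n) ≤ 2 := by
    refine Real.sSup_le ?_ zero_le_two
    rintro r ⟨L, s, -, hL, hs, rfl⟩
    exact lotteryRevenue_equalRevMeasure_le_two_of_isItemPricing hn1 hL hs
  have hbdd : BddAbove {r | ∃ (L : Set (Lottery 2)) (s : (Fin 2 → ℝ) → Option (Lottery 2)),
      L.Nonempty ∧ IsSelection L s ∧ r = lotteryRevenue (equalRevMeasure n) s} := by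
    refine ⟨n, ?_⟩
    rintro r ⟨L, s, -, hs, rfl⟩
    refine hs.lotteryRevenue_le (by linarith) ?_
    filter_upwards [ae_equalRevMeasure_mem_Icc hn1] with v hv j
    exact Icc_subset_Icc_left zero_le_one (hv j)
  obtain ⟨s, hs⟩ := exists_isSelection_of_finite (gapMenu_finite n)
  have hlot : lotteryRevenue (equalRevMeasure n) s ≤ optLotteryRev (equalRevMeasure n) :=
    le_csSup hbdd ⟨gapMenu n, s, ⟨_, gapBundle_mem_gapMenu⟩, hs, rfl⟩
  linarith [lt_lotteryRevenue_gapMenu hn hs]
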